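/- Let v ∈ ℤ³ be primitive with ‖v‖² divisible by d². Then Γ(v,d) = {a ∈ ℤ³ : d divides a × v and d² divides (a × v) × v} is a subgroup of ℤ³ of index d³ containing v. -/

import Mathlib

def dot3 (a b : Fin 3 → ℤ) : ℤ := a 0 * b 0 + a 1 * b 1 + a 2 * b 2

def cross3 (a b : Fin 3 → ℤ) : Fin 3 → ℤ :=
  ![a 1 * b 2 - a 2 * b 1, a 2 * b 0 - a 0 * b 2, a 0 * b 1 - a 1 * b 0]

lemma cross3_add_left (a b v : Fin 3 → ℤ) :
    cross3 (a + b) v = cross3 a v + cross3 b v := by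
  funext i; fin_cases i <;> simp [cross3] <;> ring

lemma cross3_zero_left (v : Fin 3 → ℤ) : cross3 0 v = 0 := by
  funext i; fin_cases i <;> simp [cross3]

lemma cross3_neg_left (a v : Fin 3 → ℤ) : cross3 (-a) v = -(cross3 a v) := by
  funext i; fin_cases i <;> simp [cross3] <;> ring

/-- The lattice `v^⊥` of integer vectors orthogonal to `v`. -/
def perpSub (v : Fin 3 → ℤ) : AddSubgroup (Fin 3 → ℤ) where
  carrier := {a | dot3 a v = 0}
  zero_mem' := by simp [dot3]
  add_mem' := by
    intro a b ha hb
    simp only [Set.mem_setOf_eq, dot3, Pi.add_apply] at *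
    linarith
  neg_mem' := by
    intro a ha
    simp only [Set.mem_setOf_eq, dot3, Pi.neg_apply] at *
    linarith

/-- The subgroup `M(v,d) = {a ∈ v^⊥ : d ∣ a × v}`. -/
def MSub (v : Fin 3 → ℤ) (d : ℤ) : AddSubgroup (Fin 3 → ℤ) where
  carrier := {a | dot3 a v = 0 ∧ ∀ i, d ∣ cross3 a v i}
  zero_mem' := ⟨by simp [dot3], by intro i; rw [cross3_zero_left]; simp⟩
  add_mem' := by
    rintro a b ⟨ha, ha'⟩ ⟨hb, hb'⟩
    refine ⟨?_, ?_⟩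
    · simp only [dot3, Pi.add_apply] at *; linarith
    · intro i; rw [cross3_add_left]; exact dvd_add (ha' i) (hb' i)
  neg_mem' := by
    rintro a ⟨ha, ha'⟩
    refine ⟨?_, ?_⟩
    · simp only [dot3, Pi.neg_apply] at *; linarith
    · intro i; rw [cross3_neg_left]; simpa using (ha' i).neg_right

/-- The subgroup `Γ(v,d) = {a : d ∣ a × v, d² ∣ (a × v) × v}`. -/
def GammaSub (v : Fin 3 → ℤ) (d : ℤ) : AddSubgroup (Fin 3 → ℤ) where
  carrier := {a | (∀ i, d ∣ cross3 a v i) ∧ ∀ i, d^2 ∣ cross3 (cross3 a v) v i}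
  zero_mem' := by
    constructor <;> intro i <;> rw [cross3_zero_left] <;> simp [cross3_zero_left]
  add_mem' := by
    rintro a b ⟨ha, ha'⟩ ⟨hb, hb'⟩
    refine ⟨fun i => ?_, fun i => ?_⟩
    · rw [cross3_add_left]; exact dvd_add (ha i) (hb i)
    · rw [cross3_add_left, cross3_add_left]; exact dvd_add (ha' i) (hb' i)
  neg_mem' := by
    rintro a ⟨ha, ha'⟩
    refine ⟨fun i => ?_, fun i => ?_⟩
    · rw [cross3_neg_left]; simpa using (ha i).neg_right
    · rw [cross3_neg_left, cross3_neg_left]; simpa using (ha' i).neg_right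

def Primitive (v : Fin 3 → ℤ) : Prop := Int.gcd (Int.gcd (v 0) (v 1)) (v 2) = 1

/-!
Since `(a × v) × v = (a·v) v - ‖v‖² a` and `d² ∣ ‖v‖²`, the second condition defining `Γ(v,d)`
says `d² ∣ (a·v) v`, i.e. `d² ∣ a·v` as `v` is primitive. So `Γ(v,d) = K ∩ ker (a ↦ a × v mod d)`
with `K = {a : d² ∣ a·v}`, of index `d²` because `a ↦ a·v mod d²` is onto (`u·v = 1` for some `u`).
On `K` the map `a ↦ a × v mod d` has image the cyclic group generated by `v mod d`, of order `d`:
for `a ∈ K`, `d` divides `(a × v) × v`, which forces `a × v ≡ ((a × v)·u) v mod d`; conversely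
`t (u × v) ∈ K` is sent to `t v`.
-/

lemma cross3_self (v : Fin 3 → ℤ) : cross3 v v = 0 := by
  funext i; fin_cases i <;> simp [cross3] <;> ring

lemma dot3_cross3_self (a v : Fin 3 → ℤ) : dot3 (cross3 a v) v = 0 := by
  simp [dot3, cross3]; ring

lemma cross3_cross3 (a v u : Fin 3 → ℤ) (i : Fin 3) :
    cross3 (cross3 a v) u i = dot3 a u * v i - dot3 u v * a i := by
  fin_cases i <;> simp [cross3, dot3] <;> ring

lemma dvd_cross3_of_forall_dvd {c : ℤ} {x : Fin 3 → ℤ} (h : ∀ j, c ∣ x j) (u : Fin 3 → ℤ)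
    (i : Fin 3) : c ∣ cross3 x u i := by
  fin_cases i <;> exact dvd_sub ((h _).mul_right _) ((h _).mul_right _)

lemma Primitive.exists_dot3_eq_one {v : Fin 3 → ℤ} (hv : Primitive v) :
    ∃ u : Fin 3 → ℤ, dot3 u v = 1 := by
  set g : ℤ := (Int.gcd (v 0) (v 1) : ℤ)
  have hg : g = v 0 * Int.gcdA (v 0) (v 1) + v 1 * Int.gcdB (v 0) (v 1) := Int.gcd_eq_gcd_ab _ _
  have hgv : (1 : ℤ) = g * Int.gcdA g (v 2) + v 2 * Int.gcdB g (v 2) := by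
    rw [← Int.gcd_eq_gcd_ab]; exact_mod_cast hv.symm
  refine ⟨![Int.gcdA (v 0) (v 1) * Int.gcdA g (v 2), Int.gcdB (v 0) (v 1) * Int.gcdA g (v 2),
    Int.gcdB g (v 2)], ?_⟩
  simp only [dot3, Matrix.cons_val_zero, Matrix.cons_val_one, Matrix.cons_val_two,
    Matrix.head_cons, Matrix.tail_cons]
  linear_combination -hgv - Int.gcdA g (v 2) * hg

section

variable {u v : Fin 3 → ℤ}

lemma forall_dvd_mul_iff (hu : dot3 u v = 1) {c x : ℤ} :
    (∀ i, c ∣ x * v i) ↔ c ∣ x := by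
  refine ⟨fun h => ?_, fun h i => h.mul_right _⟩
  have hx : x = u 0 * (x * v 0) + u 1 * (x * v 1) + u 2 * (x * v 2) := by
    simp only [dot3] at hu
    linear_combination -x * hu
  rw [hx]
  exact dvd_add (dvd_add ((h 0).mul_left _) ((h 1).mul_left _)) ((h 2).mul_left _)

lemma forall_dvd_cross3_cross3_iff (hu : dot3 u v = 1) {c : ℤ} (hc : c ∣ dot3 v v)
    (a : Fin 3 → ℤ) :
    (∀ i, c ∣ cross3 (cross3 a v) v i) ↔ c ∣ dot3 a v := by
  simp only [cross3_cross3, ← forall_dvd_mul_iff hu (x := dot3 a v)]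
  exact forall_congr' fun i => dvd_sub_left (hc.mul_right _)

lemma dvd_sub_of_forall_dvd_cross3 (hu : dot3 u v = 1) {c : ℤ} {w : Fin 3 → ℤ}
    (h : ∀ j, c ∣ cross3 w v j) (i : Fin 3) : c ∣ w i - dot3 w u * v i := by
  have := dvd_cross3_of_forall_dvd h u i
  rw [cross3_cross3, hu, one_mul] at this
  simpa using this.neg_right

lemma intCast_comp_eq_zero_iff {ι : Type*} {n : ℕ} {w : ι → ℤ} :
    (fun i => (w i : ZMod n)) = 0 ↔ ∀ i, (n : ℤ) ∣ w i := by
  simp only [funext_iff, Pi.zero_apply, ZMod.intCast_zmod_eq_zero_iff_dvd]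

def dot3ModHom (v : Fin 3 → ℤ) (n : ℕ) : (Fin 3 → ℤ) →+ ZMod n where
  toFun a := dot3 a v
  map_zero' := by simp [dot3]
  map_add' a b := by simp only [dot3, Pi.add_apply]; push_cast; ring

def cross3ModHom (v : Fin 3 → ℤ) (n : ℕ) : (Fin 3 → ℤ) →+ (Fin 3 → ZMod n) where
  toFun a i := cross3 a v i
  map_zero' := by funext i; simp [cross3_zero_left]
  map_add' a b := by funext i; simp [cross3_add_left]

lemma mem_ker_dot3ModHom {v : Fin 3 → ℤ} {n : ℕ} {a : Fin 3 → ℤ} :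
    a ∈ (dot3ModHom v n).ker ↔ (n : ℤ) ∣ dot3 a v :=
  ZMod.intCast_zmod_eq_zero_iff_dvd _ _

lemma mem_ker_cross3ModHom {v : Fin 3 → ℤ} {n : ℕ} {a : Fin 3 → ℤ} :
    a ∈ (cross3ModHom v n).ker ↔ ∀ i, (n : ℤ) ∣ cross3 a v i :=
  intCast_comp_eq_zero_iff

lemma index_ker_dot3ModHom (hu : dot3 u v = 1) (n : ℕ) :
    (dot3ModHom v n).ker.index = n := by
  have hsurj : Function.Surjective (dot3ModHom v n) := fun z => by
    obtain ⟨t, rfl⟩ := ZMod.intCast_surjective z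
    have hu' : dot3ModHom v n u = 1 := by simp [dot3ModHom, hu]
    exact ⟨t • u, by rw [map_zsmul, hu', zsmul_one]⟩
  rw [AddSubgroup.index_ker, AddMonoidHom.range_eq_top_of_surjective _ hsurj,
    AddSubgroup.card_top, Nat.card_zmod]

lemma addOrderOf_intCast_comp (hu : dot3 u v = 1) (n : ℕ) :
    addOrderOf (fun i => (v i : ZMod n)) = n := by
  have h : ∀ k : ℕ, k • (fun i => (v i : ZMod n)) = 0 ↔ n ∣ k := fun k => by
    have hk : k • (fun i => (v i : ZMod n)) = fun i => ((k * v i : ℤ) : ZMod n) := by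
      funext i; simp
    rw [hk, intCast_comp_eq_zero_iff, forall_dvd_mul_iff hu, Int.natCast_dvd_natCast]
  exact Nat.dvd_antisymm (addOrderOf_dvd_of_nsmul_eq_zero ((h n).2 dvd_rfl))
    ((h _).1 (addOrderOf_nsmul_eq_zero _))

lemma cross3ModHom_cross3 (hu : dot3 u v = 1) {n : ℕ} (hn : (n : ℤ) ∣ dot3 v v) :
    cross3ModHom v n (cross3 u v) = fun i => (v i : ZMod n) := by
  funext i
  simp only [cross3ModHom, AddMonoidHom.coe_mk, ZeroHom.coe_mk, cross3_cross3, hu, one_mul]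
  rw [ZMod.intCast_eq_intCast_iff_dvd_sub, sub_sub_cancel]
  exact hn.mul_right _

lemma map_cross3ModHom_ker_dot3ModHom (hu : dot3 u v = 1) {m n : ℕ} (hnm : n ∣ m)
    (hn : (n : ℤ) ∣ dot3 v v) :
    (dot3ModHom v m).ker.map (cross3ModHom v n) =
      AddSubgroup.zmultiples fun i => (v i : ZMod n) := by
  refine le_antisymm ?_ ?_
  · rw [AddSubgroup.map_le_iff_le_comap]
    intro a ha
    have hav : (n : ℤ) ∣ dot3 a v :=
      (Int.natCast_dvd_natCast.2 hnm).trans (mem_ker_dot3ModHom.1 ha)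
    rw [AddSubgroup.mem_comap, AddSubgroup.mem_zmultiples_iff]
    refine ⟨dot3 (cross3 a v) u, funext fun i => ?_⟩
    have key := dvd_sub_of_forall_dvd_cross3 hu ((forall_dvd_cross3_cross3_iff hu hn a).2 hav) i
    show dot3 (cross3 a v) u • (v i : ZMod n) = (cross3 a v i : ZMod n)
    rwa [zsmul_eq_mul, ← Int.cast_mul, ZMod.intCast_eq_intCast_iff_dvd_sub]
  · rw [← cross3ModHom_cross3 hu hn, ← AddMonoidHom.map_zmultiples]
    refine AddSubgroup.map_mono ((AddSubgroup.zmultiples_le ..).2 ?_)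
    rw [mem_ker_dot3ModHom, dot3_cross3_self]
    exact dvd_zero _

lemma GammaSub_eq_ker_inf_ker (hu : dot3 u v = 1) {n : ℕ}
    (hn : (n : ℤ) ^ 2 ∣ dot3 v v) :
    GammaSub v n = (cross3ModHom v n).ker ⊓ (dot3ModHom v (n ^ 2)).ker := by
  ext a
  rw [AddSubgroup.mem_inf, mem_ker_cross3ModHom, mem_ker_dot3ModHom, Nat.cast_pow,
    ← forall_dvd_cross3_cross3_iff hu hn]
  rfl

end

theorem Gamma_mem_and_index (v : Fin 3 → ℤ) (hv : Primitive v) (d : ℕ)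
    (hdvd : (d : ℤ)^2 ∣ dot3 v v) :
    v ∈ GammaSub v (d : ℤ) ∧ (GammaSub v (d : ℤ)).index = d ^ 3 := by
  obtain ⟨u, hu⟩ := hv.exists_dot3_eq_one
  have hd : (d : ℤ) ∣ dot3 v v := (dvd_pow_self _ two_ne_zero).trans hdvd
  rw [GammaSub_eq_ker_inf_ker hu hdvd]
  refine ⟨AddSubgroup.mem_inf.2 ⟨?_, ?_⟩, ?_⟩
  · rw [mem_ker_cross3ModHom, cross3_self]; exact fun _ => dvd_zero _
  · rwa [mem_ker_dot3ModHom, Nat.cast_pow]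
  rw [← AddSubgroup.relIndex_mul_index inf_le_right, AddSubgroup.inf_relIndex_right,
    AddSubgroup.relIndex_ker, map_cross3ModHom_ker_dot3ModHom hu (dvd_pow_self _ two_ne_zero) hd,
    Nat.card_zmultiples, addOrderOf_intCast_comp hu, index_ker_dot3ModHom hu]
  ring
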